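/- For every ε ∈ F with ε ≠ 0, the element h(ε) lies in the product set U · U⁻ · U · U⁻. -/
import Mathlib

open Matrix Pointwise

/-- The Suzuki unipotent `x₊(t,u)` as a 4×4 matrix. -/
def suzXp {F : Type*} [Field F] (θ : ℕ) (t u : F) : Matrix (Fin 4) (Fin 4) F :=
  !![1, t ^ θ, u, t ^ (2 * θ + 1) + t ^ θ * u + u ^ (2 * θ);
     0, 1, t, t ^ (θ + 1) + u;
     0, 0, 1, t ^ θ;
     0, 0, 0, 1]

/-- The antidiagonal permutation matrix `w` (1-indexed: entry 1 iff i+j = 5). -/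
def suzW {F : Type*} [Field F] : Matrix (Fin 4) (Fin 4) F :=
  Matrix.of fun i j => if (i : ℕ) + (j : ℕ) = 3 then 1 else 0

/-- The torus element `h(ε) = diag(ε, ε^{2θ-1}, ε^{1-2θ}, ε⁻¹)`. -/
def suzH {F : Type*} [Field F] (θ : ℕ) (ε : F) : Matrix (Fin 4) (Fin 4) F :=
  Matrix.diagonal ![ε, ε ^ (2 * (θ : ℤ) - 1), ε ^ (1 - 2 * (θ : ℤ)), ε⁻¹]

/-- The opposite unipotent `x₋(t,u) = w·x₊(t,u)·w`. -/
def suzXm {F : Type*} [Field F] (θ : ℕ) (t u : F) : Matrix (Fin 4) (Fin 4) F :=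
  suzW * suzXp θ t u * suzW

/-- `U = {x₊(t,u)}` viewed as a subset of `GL(4,F)`. -/
def suzU (F : Type*) [Field F] (θ : ℕ) : Set (GL (Fin 4) F) :=
  {g | ∃ t u : F, (↑g : Matrix (Fin 4) (Fin 4) F) = suzXp θ t u}

/-- `U⁻ = {x₋(t,u)}` viewed as a subset of `GL(4,F)`. -/
def suzUm (F : Type*) [Field F] (θ : ℕ) : Set (GL (Fin 4) F) :=
  {g | ∃ t u : F, (↑g : Matrix (Fin 4) (Fin 4) F) = suzXm θ t u}

section SuzAux

variable {F : Type*} [Field F]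

lemma suzXm_eq (θ : ℕ) (t u : F) :
    suzXm θ t u = !![1,0,0,0;
                     t^θ,1,0,0;
                     t^(θ+1)+u, t,1,0;
                     t^(2*θ+1)+t^θ*u+u^(2*θ), u, t^θ, 1] := by
  unfold suzXm suzW suzXp
  ext i j
  fin_cases i <;> fin_cases j <;>
    simp [Matrix.mul_apply, Fin.sum_univ_four, show ((0:Fin 4):ℕ) = 0 from rfl,
      show ((1:Fin 4):ℕ) = 1 from rfl, show ((2:Fin 4):ℕ) = 2 from rfl,
      show ((3:Fin 4):ℕ) = 3 from rfl]

lemma suzW_mul_self : (suzW : Matrix (Fin 4) (Fin 4) F) * suzW = 1 := by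
  unfold suzW
  ext i j
  fin_cases i <;> fin_cases j <;>
    simp [Matrix.mul_apply, Fin.sum_univ_four, Matrix.one_apply, show ((0:Fin 4):ℕ) = 0 from rfl,
      show ((1:Fin 4):ℕ) = 1 from rfl, show ((2:Fin 4):ℕ) = 2 from rfl,
      show ((3:Fin 4):ℕ) = 3 from rfl]

/-- The inverse law for `x₊` in characteristic 2. -/
lemma suzXp_mul_inv (m θ : ℕ) (hθ : θ = 2 ^ m) [CharP F 2]
    (hq : ∀ x : F, x ^ (2 * θ ^ 2) = x) (t u : F) :
    suzXp θ t u * suzXp θ t (u + t ^ (θ + 1)) = 1 := by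
  haveI : Fact (Nat.Prime 2) := ⟨Nat.prime_two⟩
  have h2 : (2 : F) = 0 := by exact_mod_cast CharP.cast_eq_zero F 2
  have frob : ∀ x y : F, (x + y) ^ θ = x ^ θ + y ^ θ := by
    intro x y; rw [hθ]; exact add_pow_char_pow ..
  have sq : ∀ x y : F, (x + y) ^ 2 = x ^ 2 + y ^ 2 := by
    intro x y; linear_combination (x * y) * h2
  have hp1t : t ^ (θ + 1) = t ^ θ * t := pow_succ t θ
  have hp2 : ∀ x : F, x ^ (2 * θ) = (x ^ θ) ^ 2 := by
    intro x; rw [mul_comm 2 θ, pow_mul]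
  have hp2' : ∀ x : F, x ^ (θ * 2) = (x ^ θ) ^ 2 := by
    intro x; rw [pow_mul]
  have hp21t : t ^ (2 * θ + 1) = (t ^ θ) ^ 2 * t := by
    rw [pow_succ, hp2]
  have e1 : (t ^ θ * t) ^ θ = t ^ (θ * θ + θ) := by
    rw [mul_pow, ← pow_mul, ← pow_add]
  have e2 : (t ^ (θ * θ + θ)) ^ 2 = t * (t ^ θ) ^ 2 := by
    rw [← pow_mul]
    have h3 : (θ * θ + θ) * 2 = 2 * θ ^ 2 + 2 * θ := by ring
    rw [h3, pow_add, hq, hp2]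
  have hpaux : ((u + t ^ θ * t) ^ θ) ^ 2 = (u ^ θ) ^ 2 + t * (t ^ θ) ^ 2 := by
    rw [frob, sq, e1, e2]
  unfold suzXp
  ext i j
  (fin_cases i <;> fin_cases j) <;>
   [(simp [-mul_eq_zero, -pow_eq_zero_iff, hp1t, hp21t, hp2, hp2', hpaux, Matrix.vecHead, Matrix.vecTail, Matrix.mul_apply, Fin.sum_univ_four, Matrix.one_apply, show ((0:Fin 4):ℕ) = 0 from rfl, show ((1:Fin 4):ℕ) = 1 from rfl, show ((2:Fin 4):ℕ) = 2 from rfl, show ((3:Fin 4):ℕ) = 3 from rfl] <;> linear_combination (0:F) * h2);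
    (simp [-mul_eq_zero, -pow_eq_zero_iff, hp1t, hp21t, hp2, hp2', hpaux, Matrix.vecHead, Matrix.vecTail, Matrix.mul_apply, Fin.sum_univ_four, Matrix.one_apply, show ((0:Fin 4):ℕ) = 0 from rfl, show ((1:Fin 4):ℕ) = 1 from rfl, show ((2:Fin 4):ℕ) = 2 from rfl, show ((3:Fin 4):ℕ) = 3 from rfl] <;> linear_combination (t^θ) * h2);
    (simp [-mul_eq_zero, -pow_eq_zero_iff, hp1t, hp21t, hp2, hp2', hpaux, Matrix.vecHead, Matrix.vecTail, Matrix.mul_apply, Fin.sum_univ_four, Matrix.one_apply, show ((0:Fin 4):ℕ) = 0 from rfl, show ((1:Fin 4):ℕ) = 1 from rfl, show ((2:Fin 4):ℕ) = 2 from rfl, show ((3:Fin 4):ℕ) = 3 from rfl] <;> linear_combination (u + t*t^θ) * h2);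
    (simp [-mul_eq_zero, -pow_eq_zero_iff, hp1t, hp21t, hp2, hp2', hpaux, Matrix.vecHead, Matrix.vecTail, Matrix.mul_apply, Fin.sum_univ_four, Matrix.one_apply, show ((0:Fin 4):ℕ) = 0 from rfl, show ((1:Fin 4):ℕ) = 1 from rfl, show ((2:Fin 4):ℕ) = 2 from rfl, show ((3:Fin 4):ℕ) = 3 from rfl] <;> linear_combination ((u^θ)^2 + 2*u*t^θ + 3*t*(t^θ)^2) * h2);
    (simp [-mul_eq_zero, -pow_eq_zero_iff, hp1t, hp21t, hp2, hp2', hpaux, Matrix.vecHead, Matrix.vecTail, Matrix.mul_apply, Fin.sum_univ_four, Matrix.one_apply, show ((0:Fin 4):ℕ) = 0 from rfl, show ((1:Fin 4):ℕ) = 1 from rfl, show ((2:Fin 4):ℕ) = 2 from rfl, show ((3:Fin 4):ℕ) = 3 from rfl] <;> linear_combination (0:F) * h2);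
    (simp [-mul_eq_zero, -pow_eq_zero_iff, hp1t, hp21t, hp2, hp2', hpaux, Matrix.vecHead, Matrix.vecTail, Matrix.mul_apply, Fin.sum_univ_four, Matrix.one_apply, show ((0:Fin 4):ℕ) = 0 from rfl, show ((1:Fin 4):ℕ) = 1 from rfl, show ((2:Fin 4):ℕ) = 2 from rfl, show ((3:Fin 4):ℕ) = 3 from rfl] <;> linear_combination (0:F) * h2);
    (simp [-mul_eq_zero, -pow_eq_zero_iff, hp1t, hp21t, hp2, hp2', hpaux, Matrix.vecHead, Matrix.vecTail, Matrix.mul_apply, Fin.sum_univ_four, Matrix.one_apply, show ((0:Fin 4):ℕ) = 0 from rfl, show ((1:Fin 4):ℕ) = 1 from rfl, show ((2:Fin 4):ℕ) = 2 from rfl, show ((3:Fin 4):ℕ) = 3 from rfl] <;> linear_combination (t) * h2);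
    (simp [-mul_eq_zero, -pow_eq_zero_iff, hp1t, hp21t, hp2, hp2', hpaux, Matrix.vecHead, Matrix.vecTail, Matrix.mul_apply, Fin.sum_univ_four, Matrix.one_apply, show ((0:Fin 4):ℕ) = 0 from rfl, show ((1:Fin 4):ℕ) = 1 from rfl, show ((2:Fin 4):ℕ) = 2 from rfl, show ((3:Fin 4):ℕ) = 3 from rfl] <;> linear_combination (u + 2*t*t^θ) * h2);
    (simp [-mul_eq_zero, -pow_eq_zero_iff, hp1t, hp21t, hp2, hp2', hpaux, Matrix.vecHead, Matrix.vecTail, Matrix.mul_apply, Fin.sum_univ_four, Matrix.one_apply, show ((0:Fin 4):ℕ) = 0 from rfl, show ((1:Fin 4):ℕ) = 1 from rfl, show ((2:Fin 4):ℕ) = 2 from rfl, show ((3:Fin 4):ℕ) = 3 from rfl] <;> linear_combination (0:F) * h2);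
    (simp [-mul_eq_zero, -pow_eq_zero_iff, hp1t, hp21t, hp2, hp2', hpaux, Matrix.vecHead, Matrix.vecTail, Matrix.mul_apply, Fin.sum_univ_four, Matrix.one_apply, show ((0:Fin 4):ℕ) = 0 from rfl, show ((1:Fin 4):ℕ) = 1 from rfl, show ((2:Fin 4):ℕ) = 2 from rfl, show ((3:Fin 4):ℕ) = 3 from rfl] <;> linear_combination (0:F) * h2);
    (simp [-mul_eq_zero, -pow_eq_zero_iff, hp1t, hp21t, hp2, hp2', hpaux, Matrix.vecHead, Matrix.vecTail, Matrix.mul_apply, Fin.sum_univ_four, Matrix.one_apply, show ((0:Fin 4):ℕ) = 0 from rfl, show ((1:Fin 4):ℕ) = 1 from rfl, show ((2:Fin 4):ℕ) = 2 from rfl, show ((3:Fin 4):ℕ) = 3 from rfl] <;> linear_combination (0:F) * h2);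
    (simp [-mul_eq_zero, -pow_eq_zero_iff, hp1t, hp21t, hp2, hp2', hpaux, Matrix.vecHead, Matrix.vecTail, Matrix.mul_apply, Fin.sum_univ_four, Matrix.one_apply, show ((0:Fin 4):ℕ) = 0 from rfl, show ((1:Fin 4):ℕ) = 1 from rfl, show ((2:Fin 4):ℕ) = 2 from rfl, show ((3:Fin 4):ℕ) = 3 from rfl] <;> linear_combination (t^θ) * h2);
    (simp [-mul_eq_zero, -pow_eq_zero_iff, hp1t, hp21t, hp2, hp2', hpaux, Matrix.vecHead, Matrix.vecTail, Matrix.mul_apply, Fin.sum_univ_four, Matrix.one_apply, show ((0:Fin 4):ℕ) = 0 from rfl, show ((1:Fin 4):ℕ) = 1 from rfl, show ((2:Fin 4):ℕ) = 2 from rfl, show ((3:Fin 4):ℕ) = 3 from rfl] <;> linear_combination (0:F) * h2);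
    (simp [-mul_eq_zero, -pow_eq_zero_iff, hp1t, hp21t, hp2, hp2', hpaux, Matrix.vecHead, Matrix.vecTail, Matrix.mul_apply, Fin.sum_univ_four, Matrix.one_apply, show ((0:Fin 4):ℕ) = 0 from rfl, show ((1:Fin 4):ℕ) = 1 from rfl, show ((2:Fin 4):ℕ) = 2 from rfl, show ((3:Fin 4):ℕ) = 3 from rfl] <;> linear_combination (0:F) * h2);
    (simp [-mul_eq_zero, -pow_eq_zero_iff, hp1t, hp21t, hp2, hp2', hpaux, Matrix.vecHead, Matrix.vecTail, Matrix.mul_apply, Fin.sum_univ_four, Matrix.one_apply, show ((0:Fin 4):ℕ) = 0 from rfl, show ((1:Fin 4):ℕ) = 1 from rfl, show ((2:Fin 4):ℕ) = 2 from rfl, show ((3:Fin 4):ℕ) = 3 from rfl] <;> linear_combination (0:F) * h2);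
    (simp [-mul_eq_zero, -pow_eq_zero_iff, hp1t, hp21t, hp2, hp2', hpaux, Matrix.vecHead, Matrix.vecTail, Matrix.mul_apply, Fin.sum_univ_four, Matrix.one_apply, show ((0:Fin 4):ℕ) = 0 from rfl, show ((1:Fin 4):ℕ) = 1 from rfl, show ((2:Fin 4):ℕ) = 2 from rfl, show ((3:Fin 4):ℕ) = 3 from rfl] <;> linear_combination (0:F) * h2)]

lemma suzXp_inv_mul (m θ : ℕ) (hθ : θ = 2 ^ m) [CharP F 2]
    (hq : ∀ x : F, x ^ (2 * θ ^ 2) = x) (t u : F) :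
    suzXp θ t (u + t ^ (θ + 1)) * suzXp θ t u = 1 := by
  have h2 : (2 : F) = 0 := by exact_mod_cast CharP.cast_eq_zero F 2
  have hself : ∀ x : F, x + x = 0 := by
    intro x; rw [← two_mul, h2, zero_mul]
  have h := suzXp_mul_inv m θ hθ hq t (u + t ^ (θ + 1))
  rwa [add_assoc, hself, add_zero] at h

lemma suzXm_mul_inv (m θ : ℕ) (hθ : θ = 2 ^ m) [CharP F 2]
    (hq : ∀ x : F, x ^ (2 * θ ^ 2) = x) (t u : F) :
    suzXm θ t u * suzXm θ t (u + t ^ (θ + 1)) = 1 := by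
  unfold suzXm
  rw [Matrix.mul_assoc (suzW * suzXp θ t u) suzW (suzW * suzXp θ t (u + t ^ (θ + 1)) * suzW),
    Matrix.mul_assoc suzW (suzXp θ t (u + t ^ (θ + 1))) suzW,
    ← Matrix.mul_assoc suzW suzW (suzXp θ t (u + t ^ (θ + 1)) * suzW),
    suzW_mul_self, Matrix.one_mul, Matrix.mul_assoc suzW (suzXp θ t u),
    ← Matrix.mul_assoc (suzXp θ t u) (suzXp θ t (u + t ^ (θ + 1))) suzW,
    suzXp_mul_inv m θ hθ hq t u, Matrix.one_mul, suzW_mul_self]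

lemma suzXm_inv_mul (m θ : ℕ) (hθ : θ = 2 ^ m) [CharP F 2]
    (hq : ∀ x : F, x ^ (2 * θ ^ 2) = x) (t u : F) :
    suzXm θ t (u + t ^ (θ + 1)) * suzXm θ t u = 1 := by
  have h2 : (2 : F) = 0 := by exact_mod_cast CharP.cast_eq_zero F 2
  have hself : ∀ x : F, x + x = 0 := by
    intro x; rw [← two_mul, h2, zero_mul]
  have h := suzXm_mul_inv m θ hθ hq t (u + t ^ (θ + 1))
  rwa [add_assoc, hself, add_zero] at h

end SuzAux

set_option maxHeartbeats 4000000 in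
theorem suzuki_torus_mem_UUmUUm (m θ : ℕ) (hθ : θ = 2 ^ m)
    (F : Type*) [Field F] [Fintype F] (hF : Fintype.card F = 2 ^ (2 * m + 1))
    (ε : F) (hε : ε ≠ 0) (g : GL (Fin 4) F)
    (hg : (↑g : Matrix (Fin 4) (Fin 4) F) = suzH θ ε) :
    g ∈ suzU F θ * suzUm F θ * suzU F θ * suzUm F θ := by
  have hchar : CharP F 2 := by
    obtain ⟨n, hp, hcard⟩ := FiniteField.card F (ringChar F)
    have hdvd : ringChar F ∣ 2 ^ (2 * m + 1) := by
      rw [← hF, hcard]; exact dvd_pow_self _ (by exact_mod_cast n.pos.ne')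
    have h2 : ringChar F = 2 :=
      (Nat.prime_dvd_prime_iff_eq hp Nat.prime_two).mp (hp.dvd_of_dvd_pow hdvd)
    rw [← h2]; exact ringChar.charP F
  haveI := hchar
  haveI : Fact (Nat.Prime 2) := ⟨Nat.prime_two⟩
  have h2 : (2 : F) = 0 := by exact_mod_cast CharP.cast_eq_zero F 2
  have hθ0 : θ ≠ 0 := by rw [hθ]; positivity
  have hq : ∀ x : F, x ^ (2 * θ ^ 2) = x := by
    intro x
    have hc : 2 * θ ^ 2 = Fintype.card F := by
      rw [hF, hθ, ← pow_mul]; ring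
    rw [hc]; exact FiniteField.pow_card x
  have frob : ∀ x y : F, (x + y) ^ θ = x ^ θ + y ^ θ := by
    intro x y; rw [hθ]; exact add_pow_char_pow ..
  have hp2 : ∀ x : F, x ^ (2 * θ) = (x ^ θ) ^ 2 := by
    intro x; rw [mul_comm 2 θ, pow_mul]
  set a := ε ^ θ with ha
  set b := ε⁻¹ ^ θ with hb
  have hei : ε * ε⁻¹ = 1 := mul_inv_cancel₀ hε
  have hab : a * b = 1 := by rw [ha, hb, ← mul_pow, hei, one_pow]
  have pa : a ^ (2 * θ) = ε := by
    rw [ha, ← pow_mul, show θ * (2 * θ) = 2 * θ ^ 2 by ring]; exact hq ε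
  have pb : b ^ (2 * θ) = ε⁻¹ := by
    rw [hb, ← pow_mul, show θ * (2 * θ) = 2 * θ ^ 2 by ring]; exact hq ε⁻¹
  set t2 : F := 1 + a ^ 2 * ε⁻¹ with ht2
  set t4 : F := a ^ 2 * ε⁻¹ * t2 with ht4
  set u4 : F := a * t2 with hu4
  have pt2 : t2 ^ θ = 1 + ε * b := by
    rw [ht2, frob, one_pow, mul_pow, ← pow_mul, pa, ← hb]
  have pt4 : t4 ^ θ = ε * b * (1 + ε * b) := by
    rw [ht4, mul_pow, pt2, mul_pow, ← pow_mul, pa, ← hb]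
  have pu4 : u4 ^ (2 * θ) = ε * (1 + ε * b) ^ 2 := by
    rw [hu4, mul_pow, pa, hp2, pt2]
  have z1 : (0 : F) ^ θ = 0 := zero_pow hθ0
  have z2 : (0 : F) ^ (θ + 1) = 0 := zero_pow (Nat.succ_ne_zero θ)
  have z3 : (0 : F) ^ (2 * θ + 1) = 0 := zero_pow (Nat.succ_ne_zero _)
  have hX1 : suzXp θ 0 1 = (!![1,0,1,1; 0,1,0,1; 0,0,1,0; 0,0,0,1] : Matrix (Fin 4) (Fin 4) F) := by
    unfold suzXp
    rw [z1, z2, z3, one_pow]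
    norm_num
  have hX3 : suzXp θ 0 b = (!![1,0,b,ε⁻¹; 0,1,0,b; 0,0,1,0; 0,0,0,1] : Matrix (Fin 4) (Fin 4) F) := by
    unfold suzXp
    rw [z1, z2, z3, pb]
    norm_num
  have hX2 : suzXm θ t2 t2 = !![1,0,0,0;
      1+ε*b,1,0,0;
      (1+ε*b)*t2+t2, t2,1,0;
      (1+ε*b)^2*t2+(1+ε*b)*t2+(1+ε*b)^2, t2, 1+ε*b, 1] := by
    rw [suzXm_eq]
    simp only [pow_succ, hp2, pt2]
  have hX4 : suzXm θ t4 u4 = !![1,0,0,0;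
      ε*b*(1+ε*b),1,0,0;
      ε*b*(1+ε*b)*t4+u4, t4,1,0;
      (ε*b*(1+ε*b))^2*t4+ε*b*(1+ε*b)*u4+ε*(1+ε*b)^2, u4, ε*b*(1+ε*b), 1] := by
    rw [suzXm_eq, pu4]
    simp only [pow_succ, hp2, pt4]
  have hH : suzH θ ε = Matrix.diagonal ![ε, a^2*ε⁻¹, ε*b^2, ε⁻¹] := by
    unfold suzH
    have hz1 : ε ^ (2 * (θ:ℤ) - 1) = a^2*ε⁻¹ := by
      rw [show 2*(θ:ℤ)-1 = ((2*θ:ℕ):ℤ) - 1 by push_cast; ring,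
        zpow_sub₀ hε, zpow_natCast, zpow_one, hp2, ← ha, div_eq_mul_inv]
    have hz2 : ε ^ (1 - 2*(θ:ℤ)) = ε*b^2 := by
      rw [show 1-2*(θ:ℤ) = 1 - ((2*θ:ℕ):ℤ) by push_cast; ring,
        zpow_sub₀ hε, zpow_one, zpow_natCast, div_eq_mul_inv, ← inv_pow, hp2, ← hb]
    rw [hz1, hz2]
  have main : suzXp θ 0 1 * suzXm θ t2 t2 * suzXp θ 0 b * suzXm θ t4 u4 = suzH θ ε := by
    rw [hX1, hX2, hX3, hX4, hH]
    ext i j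
    (fin_cases i <;> fin_cases j) <;>
     [(simp [-mul_eq_zero, -pow_eq_zero_iff, Matrix.vecHead, Matrix.vecTail, Matrix.mul_apply, Fin.sum_univ_four, Matrix.diagonal, show ((0:Fin 4):ℕ) = 0 from rfl, show ((1:Fin 4):ℕ) = 1 from rfl, show ((2:Fin 4):ℕ) = 2 from rfl, show ((3:Fin 4):ℕ) = 3 from rfl] <;> linear_combination (ε^2*b^2 + ε^2*b^3 + ε^2*b^3*t2 + ε^3*ε⁻¹*b^3 + ε^3*ε⁻¹*b^3*t2 + ε^4*ε⁻¹*b^4 + ε^4*ε⁻¹*b^4*t2) * hu4 + (ε^3*b^3 + ε^3*b^4 + ε^3*b^4*t2 + ε^4*b^4 + ε^4*b^5 + ε^4*b^5*t2 + ε^4*ε⁻¹*b^4 + ε^4*ε⁻¹*b^4*t2 + ε^6*ε⁻¹*b^6 + ε^6*ε⁻¹*b^6*t2) * ht4 + (ε^2*b^2 + ε^2*a*b^2 + 2*ε^2*a*b^3 + ε^2*a*b^3*t2 + ε^2*ε⁻¹*a^3*b^3 + ε^3*ε⁻¹*b^2 + 2*ε^3*ε⁻¹*a*b^3 + ε^3*ε⁻¹*a*b^3*t2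 + ε^3*ε⁻¹*a^2*b^3 + 2*ε^3*ε⁻¹*a^2*b^4 + ε^3*ε⁻¹*a^2*b^4*t2 + ε^3*ε⁻¹^2*a^3*b^3 + ε^3*ε⁻¹^2*a^4*b^4 + 2*ε^4*ε⁻¹*a*b^4 + ε^4*ε⁻¹*a*b^4*t2 + ε^4*ε⁻¹*a^2*b^4 + 2*ε^4*ε⁻¹*a^2*b^5 + ε^4*ε⁻¹*a^2*b^5*t2 + 2*ε^4*ε⁻¹^2*a^2*b^4 + ε^4*ε⁻¹^2*a^2*b^4*t2 + ε^4*ε⁻¹^2*a^3*b^4 + ε^4*ε⁻¹^2*a^4*b^5 + ε^4*ε⁻¹^3*a^4*b^4 + ε^5*ε⁻¹*b^4 + 2*ε^6*ε⁻¹^2*a^2*b^6 + ε^6*ε⁻¹^2*a^2*b^6*t2 + ε^6*ε⁻¹^3*a^4*b^6) * ht2 + (2*a^5*b^3 + 2*a^6*b^4 + 2*ε*a^2*b^2 + ε*a^3*b^2 + 2*ε*a^3*b^3 + ε*a^4*b^3 + 2*ε*a^4*b^4 + ε*a^5*b^4 + ε*a^6*b^5 + 2*ε*ε⁻¹*a^5*b^3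 + 2*ε*ε⁻¹*a^6*b^4 + ε^2*a^2*b^3 + ε^2*a^3*b^4 + ε^2*a^4*b^4 + ε^2*a^4*b^5 + ε^2*a^6*b^6 + ε^2*ε⁻¹*a^2*b^2 + ε^2*ε⁻¹*a^3*b^3 + ε^2*ε⁻¹*a^4*b^3 + 2*ε^2*ε⁻¹*a^4*b^4 + ε^2*ε⁻¹*a^5*b^4 + ε^2*ε⁻¹*a^6*b^5 + ε^2*ε⁻¹^2*a^5*b^3 + 2*ε^2*ε⁻¹^2*a^6*b^4 + 2*ε^3*a^2*b^4 + ε^3*a^4*b^6 + ε^3*ε⁻¹*a^3*b^4 + ε^3*ε⁻¹*a^4*b^4 + ε^3*ε⁻¹*a^4*b^5 + ε^3*ε⁻¹*a^6*b^6 + ε^3*ε⁻¹^2*a^4*b^4 + ε^3*ε⁻¹^2*a^5*b^4 + ε^3*ε⁻¹^2*a^6*b^5 + ε^3*ε⁻¹^3*a^6*b^4 + ε^4*ε⁻¹*a^2*b^4 + ε^4*ε⁻¹*a^4*b^6 + ε^4*ε⁻¹^2*a^6*b^6 + ε^5*ε⁻¹^2*a^4*b^6 + ε^5*ε⁻¹^3*a^6*b^6)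 * hei + (4*ε*a + 4*ε*a^2*b + 3*ε*a^3*b^2 + 2*ε*a^4*b^3 + ε*a^5*b^4 + 2*ε^2 + 4*ε^2*b + 2*ε^2*a*b + 3*ε^2*a*b^2 + 2*ε^2*a^2*b^2 + 2*ε^2*a^2*b^3 + 2*ε^2*a^3*b^3 + ε^2*a^3*b^4 + ε^2*a^4*b^4 + ε^2*a^5*b^5 + ε^3*b^2 + ε^3*a*b^3 + ε^3*a^2*b^4 + ε^3*a^3*b^5) * hab + (1 + u4 + 2*t2 + b*u4 + 2*b*t2*u4 + a^5*b^3 + a^6*b^4 + ε*b + ε*b*u4 + ε*b*t4 + 4*ε*b*t2 + ε*b^2*u4 + ε*b^2*t4 + 3*ε*b^2*t2*u4 + 2*ε*b^2*t2*t4 + 2*ε*a + ε*a^2*b^2 + ε*a^3*b^3 + ε*a^4*b^4 + ε*ε⁻¹ + 2*ε*ε⁻¹*t2 + ε*ε⁻¹*b*u4 + 2*ε*ε⁻¹*b*t2*u4 + ε^2 + 3*ε^2*b + ε^2*b^2 + 2*ε^2*b^2*t4 + 3*ε^2*b^2*t2 + 2*ε^2*b^3*t4 + ε^2*b^3*t2*u4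 + 5*ε^2*b^3*t2*t4 + ε^2*a*b^3 + 3*ε^2*ε⁻¹*b + 6*ε^2*ε⁻¹*b*t2 + 2*ε^2*ε⁻¹*b^2*u4 + ε^2*ε⁻¹*b^2*t4 + 4*ε^2*ε⁻¹*b^2*t2*u4 + 2*ε^2*ε⁻¹*b^2*t2*t4 + ε^2*ε⁻¹*a^3*b^3 + ε^3*b^2 + ε^3*b^3*t4 + ε^3*b^3*t2 + ε^3*b^4*t4 + 4*ε^3*b^4*t2*t4 + ε^3*a^2*b^4 + 4*ε^3*ε⁻¹*b^2 + 6*ε^3*ε⁻¹*b^2*t2 + ε^3*ε⁻¹*b^3*u4 + 3*ε^3*ε⁻¹*b^3*t4 + 2*ε^3*ε⁻¹*b^3*t2*u4 + 6*ε^3*ε⁻¹*b^3*t2*t4 + ε^3*ε⁻¹*a*b^3 + ε^3*ε⁻¹*a^2*b^4 + ε^3*ε⁻¹^2*a^3*b^3 + ε^3*ε⁻¹^2*a^4*b^4 + ε^4*b^5*t2*t4 + 2*ε^4*ε⁻¹*b^3 + 3*ε^4*ε⁻¹*b^3*t2 + 3*ε^4*ε⁻¹*b^4*t4 + 6*ε^4*ε⁻¹*b^4*t2*t4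 + ε^4*ε⁻¹*a*b^4 + ε^4*ε⁻¹*a^2*b^5 + ε^4*ε⁻¹^2*a^2*b^4 + ε^4*ε⁻¹^2*a^3*b^4 + ε^4*ε⁻¹^2*a^4*b^5 + ε^4*ε⁻¹^3*a^4*b^4 + ε^5*ε⁻¹*b^4 + 2*ε^5*ε⁻¹*b^5*t4 + 3*ε^5*ε⁻¹*b^5*t2*t4 + ε^6*ε⁻¹^2*a^2*b^6 + ε^6*ε⁻¹^3*a^4*b^6) * h2);
      (simp [-mul_eq_zero, -pow_eq_zero_iff, Matrix.vecHead, Matrix.vecTail, Matrix.mul_apply, Fin.sum_univ_four, Matrix.diagonal, show ((0:Fin 4):ℕ) = 0 from rfl, show ((1:Fin 4):ℕ) = 1 from rfl, show ((2:Fin 4):ℕ) = 2 from rfl, show ((3:Fin 4):ℕ) = 3 from rfl] <;> linear_combination (1 + ε^2*ε⁻¹*b^2 + ε^2*ε⁻¹*b^2*t2) * hu4 + (ε*b + ε^2*b^3 + ε^2*b^3*t2) * ht4 + (a + ε*ε⁻¹*a^2*b + 2*ε^2*ε⁻¹*a*b^2 + ε^2*ε⁻¹*a*b^2*t2 + 2*ε^2*ε⁻¹*a^2*b^3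 + ε^2*ε⁻¹*a^2*b^3*t2 + ε^2*ε⁻¹^2*a^3*b^2 + ε^2*ε⁻¹^2*a^4*b^3) * ht2 + (a^2*b + a^3*b^2 + a^4*b^3 + ε⁻¹*a^4*b + ε⁻¹*a^5*b^2 + ε⁻¹*a^6*b^3 + ε*ε⁻¹*a^3*b^2 + ε*ε⁻¹*a^4*b^3 + ε*ε⁻¹^2*a^5*b^2 + ε*ε⁻¹^2*a^6*b^3) * hei + (3*a + 2*a^2*b + a^3*b^2 + 3*ε⁻¹*a^3 + 2*ε⁻¹*a^4*b + ε⁻¹*a^5*b^2) * hab + (t4 + t2 + b*t4 + b*t2*u4 + 2*b*t2*t4 + 2*a + ε⁻¹*u4 + 2*ε⁻¹*t2*u4 + 2*ε⁻¹*a^3 + ε*b^2*t4 + 2*ε*b^2*t2*t4 + ε*ε⁻¹*b*u4 + 2*ε*ε⁻¹*b*t2*u4 + ε^2*ε⁻¹*a*b^2 + ε^2*ε⁻¹*a^2*b^3 + ε^2*ε⁻¹^2*a^3*b^2 + ε^2*ε⁻¹^2*a^4*b^3) * h2);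
      (simp [-mul_eq_zero, -pow_eq_zero_iff, Matrix.vecHead, Matrix.vecTail, Matrix.mul_apply, Fin.sum_univ_four, Matrix.diagonal, show ((0:Fin 4):ℕ) = 0 from rfl, show ((1:Fin 4):ℕ) = 1 from rfl, show ((2:Fin 4):ℕ) = 2 from rfl, show ((3:Fin 4):ℕ) = 3 from rfl] <;> linear_combination (ε^2*b^3 + ε^3*ε⁻¹*b^3 + ε^4*ε⁻¹*b^4) * ht2 + (2*ε*a^2*b^3 + ε^2*a^2*b^4 + ε^2*ε⁻¹*a^2*b^3 + ε^3*ε⁻¹*a^2*b^4) * hei + (ε^2*b^2 + ε^2*a*b^3) * hab + (1 + b + 2*b*t2 + ε*b + ε*b^2 + 3*ε*b^2*t2 + ε*a^2*b^3 + ε*ε⁻¹*b + 2*ε*ε⁻¹*b*t2 + ε^2*b^2 + ε^2*b^3 + ε^2*b^3*t2 + 2*ε^2*ε⁻¹*b^2 + 4*ε^2*ε⁻¹*b^2*t2 + 2*ε^3*ε⁻¹*b^3 + 2*ε^3*ε⁻¹*b^3*t2 + ε^4*ε⁻¹*b^4) * h2);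
      (simp [-mul_eq_zero, -pow_eq_zero_iff, Matrix.vecHead, Matrix.vecTail, Matrix.mul_apply, Fin.sum_univ_four, Matrix.diagonal, show ((0:Fin 4):ℕ) = 0 from rfl, show ((1:Fin 4):ℕ) = 1 from rfl, show ((2:Fin 4):ℕ) = 2 from rfl, show ((3:Fin 4):ℕ) = 3 from rfl] <;> linear_combination (ε^2*ε⁻¹*b^2) * ht2 + (a^2*b^2 + ε*ε⁻¹*a^2*b^2) * hei + (1 + a*b) * hab + (1 + b*t2 + ε⁻¹ + 2*ε⁻¹*t2 + ε*ε⁻¹*b + 2*ε*ε⁻¹*b*t2 + ε^2*ε⁻¹*b^2) * h2);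
      (simp [-mul_eq_zero, -pow_eq_zero_iff, Matrix.vecHead, Matrix.vecTail, Matrix.mul_apply, Fin.sum_univ_four, Matrix.diagonal, show ((0:Fin 4):ℕ) = 0 from rfl, show ((1:Fin 4):ℕ) = 1 from rfl, show ((2:Fin 4):ℕ) = 2 from rfl, show ((3:Fin 4):ℕ) = 3 from rfl] <;> linear_combination (1 + ε^2*b^2 + ε^2*ε⁻¹*b^2 + ε^2*ε⁻¹*b^2*t2 + ε^4*ε⁻¹*b^4 + ε^4*ε⁻¹*b^4*t2) * hu4 + (ε*b + ε^2*b^2 + ε^3*b^3 + ε^3*ε⁻¹*b^3 + ε^3*ε⁻¹*b^3*t2 + ε^4*b^4 + ε^4*ε⁻¹*b^4 + ε^4*ε⁻¹*b^4*t2 + ε^5*ε⁻¹*b^5 + ε^5*ε⁻¹*b^5*t2 + ε^6*ε⁻¹*b^6 + ε^6*ε⁻¹*b^6*t2) * ht4 + (a + ε*b + ε*ε⁻¹*a^2*b + ε^2*a*b^2 + ε^2*ε⁻¹*b + 2*ε^2*ε⁻¹*a*b^2 + ε^2*ε⁻¹*a*b^2*t2 + ε^2*ε⁻¹*a^2*b^2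 + ε^2*ε⁻¹^2*a^3*b^2 + ε^3*b^3 + ε^3*ε⁻¹*b^2 + ε^3*ε⁻¹*a^2*b^3 + 2*ε^3*ε⁻¹^2*a^2*b^3 + ε^3*ε⁻¹^2*a^2*b^3*t2 + ε^3*ε⁻¹^3*a^4*b^3 + ε^4*ε⁻¹*b^3 + 2*ε^4*ε⁻¹*a*b^4 + ε^4*ε⁻¹*a*b^4*t2 + ε^4*ε⁻¹*a^2*b^4 + 2*ε^4*ε⁻¹^2*a^2*b^4 + ε^4*ε⁻¹^2*a^2*b^4*t2 + ε^4*ε⁻¹^2*a^3*b^4 + ε^4*ε⁻¹^3*a^4*b^4 + ε^5*ε⁻¹*b^4 + 2*ε^5*ε⁻¹^2*a^2*b^5 + ε^5*ε⁻¹^2*a^2*b^5*t2 + ε^5*ε⁻¹^3*a^4*b^5 + 2*ε^6*ε⁻¹^2*a^2*b^6 + ε^6*ε⁻¹^2*a^2*b^6*t2 + ε^6*ε⁻¹^3*a^4*b^6) * ht2 + (a^2*b + a^3*b^2 + a^4*b^2 + a^4*b^3 + a^6*b^4 + ε⁻¹*a^4*b + ε⁻¹*a^5*b^2 + ε⁻¹*a^6*b^3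 + 2*ε*a^2*b^2 + ε*a^3*b^2 + ε*a^4*b^3 + ε*a^4*b^4 + ε*a^5*b^4 + ε*a^6*b^5 + ε*ε⁻¹*a^2*b + ε*ε⁻¹*a^3*b^2 + ε*ε⁻¹*a^4*b^2 + ε*ε⁻¹*a^4*b^3 + ε*ε⁻¹*a^6*b^4 + ε*ε⁻¹^2*a^5*b^2 + ε*ε⁻¹^2*a^6*b^3 + ε^2*a^2*b^3 + ε^2*a^3*b^4 + ε^2*a^4*b^4 + ε^2*a^4*b^5 + ε^2*a^6*b^6 + ε^2*ε⁻¹*a^2*b^2 + ε^2*ε⁻¹*a^4*b^3 + ε^2*ε⁻¹*a^4*b^4 + ε^2*ε⁻¹*a^5*b^4 + ε^2*ε⁻¹*a^6*b^5 + ε^2*ε⁻¹^2*a^4*b^3 + ε^2*ε⁻¹^2*a^6*b^4 + ε^2*ε⁻¹^3*a^6*b^3 + 2*ε^3*a^2*b^4 + ε^3*a^4*b^6 + ε^3*ε⁻¹*a^2*b^3 + ε^3*ε⁻¹*a^3*b^4 + ε^3*ε⁻¹*a^4*b^4 + ε^3*ε⁻¹*a^4*b^5 + ε^3*ε⁻¹*a^6*b^6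 + ε^3*ε⁻¹^2*a^4*b^4 + ε^3*ε⁻¹^2*a^5*b^4 + ε^3*ε⁻¹^2*a^6*b^5 + ε^3*ε⁻¹^3*a^6*b^4 + ε^4*ε⁻¹*a^2*b^4 + ε^4*ε⁻¹*a^4*b^6 + ε^4*ε⁻¹^2*a^4*b^5 + ε^4*ε⁻¹^2*a^6*b^6 + ε^4*ε⁻¹^3*a^6*b^5 + ε^5*ε⁻¹^2*a^4*b^6 + ε^5*ε⁻¹^3*a^6*b^6) * hei + (3*a + 2*a^2 + 2*a^2*b + 2*a^3*b + a^3*b^2 + a^4*b^2 + a^5*b^3 + 3*ε⁻¹*a^3 + 2*ε⁻¹*a^4*b + ε⁻¹*a^5*b^2 + ε + 4*ε*a + ε*a*b + 4*ε*a^2*b + ε*a^2*b^2 + 3*ε*a^3*b^2 + ε*a^3*b^3 + 2*ε*a^4*b^3 + ε*a^5*b^4 + 2*ε^2 + 4*ε^2*b + 2*ε^2*a*b + 3*ε^2*a*b^2 + 2*ε^2*a^2*b^2 + 2*ε^2*a^2*b^3 + 2*ε^2*a^3*b^3 + ε^2*a^3*b^4 + ε^2*a^4*b^4 + ε^2*a^5*b^5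 + ε^3*b^2 + ε^3*a*b^3 + ε^3*a^2*b^4 + ε^3*a^3*b^5) * hab + (1 + t2 + b*u4 + b*t2*u4 + 2*a + a^2 + 2*ε⁻¹*a^3 + ε + 3*ε*b + ε*b*u4 + 2*ε*b*t2 + 2*ε*b^2*u4 + ε*b^2*t4 + 2*ε*b^2*t2*u4 + ε*b^2*t2*t4 + 2*ε*a + ε*a^2*b^2 + ε*ε⁻¹ + ε*ε⁻¹*t2 + ε*ε⁻¹*b*u4 + ε*ε⁻¹*b*t2*u4 + ε*ε⁻¹*a^2*b + ε^2 + 3*ε^2*b + 2*ε^2*b^2 + ε^2*b^2*t4 + 2*ε^2*b^2*t2 + ε^2*b^3*u4 + 3*ε^2*b^3*t4 + ε^2*b^3*t2*u4 + 3*ε^2*b^3*t2*t4 + 4*ε^2*ε⁻¹*b + 3*ε^2*ε⁻¹*b*t2 + 2*ε^2*ε⁻¹*b^2*u4 + ε^2*ε⁻¹*b^2*t4 + 2*ε^2*ε⁻¹*b^2*t2*u4 + ε^2*ε⁻¹*b^2*t2*t4 + ε^2*ε⁻¹*a*b^2 + ε^2*ε⁻¹^2*a^3*b^2 + ε^3*b^2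 + ε^3*b^3 + ε^3*b^3*t4 + 3*ε^3*b^4*t4 + 3*ε^3*b^4*t2*t4 + ε^3*a^2*b^4 + 5*ε^3*ε⁻¹*b^2 + 4*ε^3*ε⁻¹*b^2*t2 + 2*ε^3*ε⁻¹*b^3*u4 + 3*ε^3*ε⁻¹*b^3*t4 + 2*ε^3*ε⁻¹*b^3*t2*u4 + 3*ε^3*ε⁻¹*b^3*t2*t4 + ε^3*ε⁻¹*a^2*b^3 + ε^3*ε⁻¹^2*a^2*b^3 + ε^3*ε⁻¹^3*a^4*b^3 + ε^4*b^5*t4 + ε^4*b^5*t2*t4 + 3*ε^4*ε⁻¹*b^3 + 2*ε^4*ε⁻¹*b^3*t2 + 4*ε^4*ε⁻¹*b^4*t4 + 4*ε^4*ε⁻¹*b^4*t2*t4 + ε^4*ε⁻¹*a*b^4 + ε^4*ε⁻¹^2*a^2*b^4 + ε^4*ε⁻¹^2*a^3*b^4 + ε^4*ε⁻¹^3*a^4*b^4 + ε^5*ε⁻¹*b^4 + 2*ε^5*ε⁻¹*b^5*t4 + 2*ε^5*ε⁻¹*b^5*t2*t4 + ε^5*ε⁻¹^2*a^2*b^5 +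 ε^5*ε⁻¹^3*a^4*b^5 + ε^6*ε⁻¹^2*a^2*b^6 + ε^6*ε⁻¹^3*a^4*b^6) * h2);
      (simp [-mul_eq_zero, -pow_eq_zero_iff, Matrix.vecHead, Matrix.vecTail, Matrix.mul_apply, Fin.sum_univ_four, Matrix.diagonal, show ((0:Fin 4):ℕ) = 0 from rfl, show ((1:Fin 4):ℕ) = 1 from rfl, show ((2:Fin 4):ℕ) = 2 from rfl, show ((3:Fin 4):ℕ) = 3 from rfl] <;> linear_combination (1 + b + b*t2 + ε*ε⁻¹*b + ε*ε⁻¹*b*t2 + ε^2*ε⁻¹*b^2 + ε^2*ε⁻¹*b^2*t2) * hu4 + (1 + ε*b + ε*b^2 + ε*b^2*t2 + ε^2*b^3 + ε^2*b^3*t2) * ht4 + (1 + a + 2*a*b + a*b*t2 + ε⁻¹*a^2 + ε⁻¹*a^3*b + 2*ε*ε⁻¹*a*b + ε*ε⁻¹*a*b*t2 + ε*ε⁻¹*a^2*b + 2*ε*ε⁻¹*a^2*b^2 + ε*ε⁻¹*a^2*b^2*t2 + ε*ε⁻¹^2*a^3*b + ε*ε⁻¹^2*a^4*b^2 + 2*ε^2*ε⁻¹*a*b^2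 + ε^2*ε⁻¹*a*b^2*t2 + 2*ε^2*ε⁻¹*a^2*b^3 + ε^2*ε⁻¹*a^2*b^3*t2 + ε^2*ε⁻¹^2*a^3*b^2 + ε^2*ε⁻¹^2*a^4*b^3) * ht2 + (a^2*b + a^3*b^2 + a^4*b^3 + ε⁻¹*a^3*b + ε⁻¹*a^4*b + ε⁻¹*a^4*b^2 + ε⁻¹*a^5*b^2 + ε⁻¹*a^6*b^3 + ε⁻¹^2*a^5*b + ε⁻¹^2*a^6*b^2 + ε*ε⁻¹*a^3*b^2 + ε*ε⁻¹*a^4*b^3 + ε*ε⁻¹^2*a^5*b^2 + ε*ε⁻¹^2*a^6*b^3) * hei + (3*a + 2*a^2*b + a^3*b^2 + ε⁻¹*a^2 + 3*ε⁻¹*a^3 + ε⁻¹*a^3*b + 2*ε⁻¹*a^4*b + ε⁻¹*a^5*b^2 + ε⁻¹^2*a^4 + ε⁻¹^2*a^5*b) * hab + (1 + b*t4 + b*t2*t4 + 2*a + a*b + ε⁻¹*u4 + ε⁻¹*t2*u4 + ε⁻¹*a^2 + 2*ε⁻¹*a^3 + 2*ε⁻¹*a^3*b + ε⁻¹^2*a^4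 + ε⁻¹^2*a^5*b + ε*b^2*t4 + ε*b^2*t2*t4 + ε*ε⁻¹*b*u4 + ε*ε⁻¹*b*t2*u4 + ε*ε⁻¹*a*b + ε*ε⁻¹*a^2*b^2 + ε*ε⁻¹^2*a^3*b + ε*ε⁻¹^2*a^4*b^2 + ε^2*ε⁻¹*a*b^2 + ε^2*ε⁻¹*a^2*b^3 + ε^2*ε⁻¹^2*a^3*b^2 + ε^2*ε⁻¹^2*a^4*b^3) * h2);
      (simp [-mul_eq_zero, -pow_eq_zero_iff, Matrix.vecHead, Matrix.vecTail, Matrix.mul_apply, Fin.sum_univ_four, Matrix.diagonal, show ((0:Fin 4):ℕ) = 0 from rfl, show ((1:Fin 4):ℕ) = 1 from rfl, show ((2:Fin 4):ℕ) = 2 from rfl, show ((3:Fin 4):ℕ) = 3 from rfl] <;> linear_combination (ε^2*ε⁻¹*b^2 + ε^4*ε⁻¹*b^4) * ht2 + (a^2*b^2 + ε*ε⁻¹*a^2*b^2 + ε^2*a^2*b^4 + ε^3*ε⁻¹*a^2*b^4) * hei + (1 + a*b + ε^2*b^2 + ε^2*a*b^3) * hab + (1 + b + b*t2 + ε*b +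 2*ε*b^2 + 2*ε*b^2*t2 + ε*ε⁻¹*b + ε*ε⁻¹*b*t2 + ε^2*b^2 + ε^2*b^3 + ε^2*b^3*t2 + 3*ε^2*ε⁻¹*b^2 + 2*ε^2*ε⁻¹*b^2*t2 + 2*ε^3*ε⁻¹*b^3 + 2*ε^3*ε⁻¹*b^3*t2 + ε^4*ε⁻¹*b^4) * h2);
      (simp [-mul_eq_zero, -pow_eq_zero_iff, Matrix.vecHead, Matrix.vecTail, Matrix.mul_apply, Fin.sum_univ_four, Matrix.diagonal, show ((0:Fin 4):ℕ) = 0 from rfl, show ((1:Fin 4):ℕ) = 1 from rfl, show ((2:Fin 4):ℕ) = 2 from rfl, show ((3:Fin 4):ℕ) = 3 from rfl] <;> linear_combination (b + ε*ε⁻¹*b + ε^2*ε⁻¹*b^2) * ht2 + (a^2*b^2 + ε⁻¹*a^2*b + ε*ε⁻¹*a^2*b^2) * hei + (1 + a*b) * hab + (1 + b + ε⁻¹ + ε⁻¹*t2 + ε⁻¹*a^2*b + 2*ε*ε⁻¹*b + ε*ε⁻¹*b*t2 + ε^2*ε⁻¹*b^2) * h2);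
      (simp [-mul_eq_zero, -pow_eq_zero_iff, Matrix.vecHead, Matrix.vecTail, Matrix.mul_apply, Fin.sum_univ_four, Matrix.diagonal, show ((0:Fin 4):ℕ) = 0 from rfl, show ((1:Fin 4):ℕ) = 1 from rfl, show ((2:Fin 4):ℕ) = 2 from rfl, show ((3:Fin 4):ℕ) = 3 from rfl] <;> linear_combination (1 + ε^2*b^3*t2 + ε^2*ε⁻¹*b^2*t2 + ε^3*ε⁻¹*b^3*t2) * hu4 + (ε*b + ε^2*b^2 + ε^3*b^4*t2 + ε^3*ε⁻¹*b^3*t2 + ε^4*b^5*t2 + ε^5*ε⁻¹*b^5*t2) * ht4 + (a + ε*b + ε*ε⁻¹*a^2*b + ε^2*b^2 + ε^2*a*b^3 + ε^2*a*b^3*t2 + ε^2*ε⁻¹*b + ε^2*ε⁻¹*a*b^2 + ε^2*ε⁻¹*a*b^2*t2 + ε^2*ε⁻¹*a^2*b^2 + ε^2*ε⁻¹*a^3*b^3 + ε^2*ε⁻¹^2*a^3*b^2 + ε^3*b^3 + ε^3*ε⁻¹*a*b^3 + ε^3*ε⁻¹*a*b^3*t2 + ε^3*ε⁻¹*a^2*b^4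 + ε^3*ε⁻¹*a^2*b^4*t2 + ε^3*ε⁻¹^2*a^2*b^3 + ε^3*ε⁻¹^2*a^2*b^3*t2 + ε^3*ε⁻¹^2*a^3*b^3 + ε^3*ε⁻¹^2*a^4*b^4 + ε^3*ε⁻¹^3*a^4*b^3 + ε^4*ε⁻¹*b^3 + ε^4*ε⁻¹*a^2*b^5 + ε^4*ε⁻¹*a^2*b^5*t2 + ε^4*ε⁻¹^2*a^4*b^5 + ε^5*ε⁻¹^2*a^2*b^5 + ε^5*ε⁻¹^2*a^2*b^5*t2 + ε^5*ε⁻¹^3*a^4*b^5) * ht2 + (a^2*b + a^4*b^2 + 2*a^5*b^3 + a^6*b^4 + ε⁻¹*a^4*b + ε⁻¹*a^5*b^2 + ε⁻¹*a^6*b^3 + ε*b + ε*a*b^2 + ε*a^2*b^3 + 2*ε*a^6*b^5 + ε*ε⁻¹*a^2*b + ε*ε⁻¹*a^4*b^2 + 2*ε*ε⁻¹*a^5*b^3 + ε*ε⁻¹*a^6*b^4 + ε*ε⁻¹^2*a^5*b^2 + ε*ε⁻¹^2*a^6*b^3 + ε^2*a*b^3 + 2*ε^2*a^2*b^3 + ε^2*a^2*b^4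 + ε^2*ε⁻¹*a^2*b^3 + 2*ε^2*ε⁻¹*a^6*b^5 + ε^2*ε⁻¹^2*a^5*b^3 + ε^2*ε⁻¹^2*a^6*b^4 + ε^2*ε⁻¹^3*a^6*b^3 + ε^3*b^3 + 2*ε^3*a^2*b^5 + ε^3*ε⁻¹*a^2*b^3 + 2*ε^3*ε⁻¹^2*a^6*b^5 + ε^4*ε⁻¹*a^2*b^5 + ε^4*ε⁻¹^3*a^6*b^5) * hei + (a + 2*a^2 + 2*a^3*b + a^4*b^2 + a^5*b^3 + 3*ε⁻¹*a^3 + 2*ε⁻¹*a^4*b + ε⁻¹*a^5*b^2 + 2*ε*b + ε*a*b^2 + ε^2*b^2 + ε^2*a*b^3) * hab + (t2 + b*t2*u4 + a + a^2 + a^5*b^3 + 2*ε⁻¹*a^3 + 2*ε*b + ε*b*t2 + ε*b^2*t2*u4 + ε*b^2*t2*t4 + ε*a^6*b^5 + ε*ε⁻¹*t2 + ε*ε⁻¹*b*t2*u4 + ε*ε⁻¹*a^2*b + ε^2*b^2 + ε^2*b^2*t2 + 2*ε^2*b^3*t2*t4 + ε^2*a*b^3 + ε^2*a^2*b^3 +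 2*ε^2*ε⁻¹*b*t2 + ε^2*ε⁻¹*b^2*t2*u4 + ε^2*ε⁻¹*b^2*t2*t4 + ε^2*ε⁻¹*a^2*b^2 + ε^2*ε⁻¹*a^3*b^3 + ε^2*ε⁻¹^2*a^3*b^2 + ε^3*b^3 + ε^3*b^4*t2*t4 + ε^3*a^2*b^5 + 2*ε^3*ε⁻¹*b^2*t2 + 2*ε^3*ε⁻¹*b^3*t2*t4 + ε^3*ε⁻¹^2*a^3*b^3 + ε^3*ε⁻¹^2*a^4*b^4 + ε^3*ε⁻¹^3*a^4*b^3 + 2*ε^4*ε⁻¹*b^4*t2*t4 + ε^4*ε⁻¹^2*a^4*b^5 + ε^5*ε⁻¹^3*a^4*b^5) * h2);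
      (simp [-mul_eq_zero, -pow_eq_zero_iff, Matrix.vecHead, Matrix.vecTail, Matrix.mul_apply, Fin.sum_univ_four, Matrix.diagonal, show ((0:Fin 4):ℕ) = 0 from rfl, show ((1:Fin 4):ℕ) = 1 from rfl, show ((2:Fin 4):ℕ) = 2 from rfl, show ((3:Fin 4):ℕ) = 3 from rfl] <;> linear_combination (b*t2 + ε*ε⁻¹*b*t2) * hu4 + (1 + ε*b^2*t2) * ht4 + (1 + a*b + a*b*t2 + ε⁻¹*a^2 + ε⁻¹*a^3*b + ε*ε⁻¹*a*b + ε*ε⁻¹*a*b*t2 + ε*ε⁻¹*a^2*b^2 + ε*ε⁻¹*a^2*b^2*t2 + ε*ε⁻¹^2*a^3*b + ε*ε⁻¹^2*a^4*b^2) * ht2 + (a*b + a^2*b^2 + ε⁻¹^2*a^5*b + ε⁻¹^2*a^6*b^2) * hei + (1 + a*b + ε⁻¹^2*a^4 + ε⁻¹^2*a^5*b) * hab + (1 + b*t2*t4 + a*b + ε⁻¹*t2*u4 + ε⁻¹*a^2 + ε⁻¹*a^3*b + ε⁻¹^2*a^4 + ε⁻¹^2*a^5*b + ε*ε⁻¹^2*a^3*b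 + ε*ε⁻¹^2*a^4*b^2) * h2);
      (simp [-mul_eq_zero, -pow_eq_zero_iff, Matrix.vecHead, Matrix.vecTail, Matrix.mul_apply, Fin.sum_univ_four, Matrix.diagonal, show ((0:Fin 4):ℕ) = 0 from rfl, show ((1:Fin 4):ℕ) = 1 from rfl, show ((2:Fin 4):ℕ) = 2 from rfl, show ((3:Fin 4):ℕ) = 3 from rfl] <;> linear_combination (ε^2*b^3 + ε^2*ε⁻¹*b^2 + ε^3*ε⁻¹*b^3) * ht2 + (a^2*b^2 + ε*b^2 + 2*ε*a^2*b^3 + ε*ε⁻¹*a^2*b^2 + ε^2*b^3 + ε^2*ε⁻¹*a^2*b^3) * hei + (1 + a*b) * hab + (1 + b*t2 + ε*b^2*t2 + ε*a^2*b^3 + ε*ε⁻¹*b*t2 + ε^2*b^3 + ε^2*ε⁻¹*b^2*t2) * h2);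
      (simp [-mul_eq_zero, -pow_eq_zero_iff, Matrix.vecHead, Matrix.vecTail, Matrix.mul_apply, Fin.sum_univ_four, Matrix.diagonal, show ((0:Fin 4):ℕ) = 0 from rfl, show ((1:Fin 4):ℕ) = 1 from rfl, show ((2:Fin 4):ℕ) = 2 from rfl, show ((3:Fin 4):ℕ) = 3 from rfl] <;> linear_combination (b + ε*ε⁻¹*b) * ht2 + (b + ε⁻¹*a^2*b) * hei + (b + ε⁻¹*t2 + ε⁻¹*a^2*b) * h2);
      (simp [-mul_eq_zero, -pow_eq_zero_iff, Matrix.vecHead, Matrix.vecTail, Matrix.mul_apply, Fin.sum_univ_four, Matrix.diagonal, show ((0:Fin 4):ℕ) = 0 from rfl, show ((1:Fin 4):ℕ) = 1 from rfl, show ((2:Fin 4):ℕ) = 2 from rfl, show ((3:Fin 4):ℕ) = 3 from rfl] <;> linear_combination (1 + b + ε*ε⁻¹*b + ε^2*b^2 + ε^2*b^3 + ε^2*ε⁻¹*b^2 + ε^2*ε⁻¹*b^2*t2 + ε^3*ε⁻¹*b^3 + ε^4*ε⁻¹*b^4 + ε^4*ε⁻¹*b^4*t2) * hu4 + (ε*b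 + ε*b^2 + ε^2*b^2 + ε^2*b^3 + ε^2*ε⁻¹*b^2 + ε^3*b^3 + ε^3*b^4 + ε^3*ε⁻¹*b^3*t2 + ε^4*b^4 + ε^4*b^5 + ε^4*ε⁻¹*b^4*t2 + ε^5*ε⁻¹*b^5*t2 + ε^6*ε⁻¹*b^6 + ε^6*ε⁻¹*b^6*t2) * ht4 + (a + a*b + ε*b + ε*ε⁻¹*a*b + ε*ε⁻¹*a^2*b + ε*ε⁻¹*a^2*b^2 + ε^2*a*b^2 + ε^2*a*b^3 + ε^2*ε⁻¹*b + 2*ε^2*ε⁻¹*a*b^2 + ε^2*ε⁻¹*a*b^2*t2 + ε^2*ε⁻¹*a^2*b^2 + ε^2*ε⁻¹*a^2*b^3 + ε^2*ε⁻¹^2*a^2*b^2 + ε^2*ε⁻¹^2*a^3*b^2 + ε^3*b^3 + ε^3*ε⁻¹*b^2 + ε^3*ε⁻¹*a*b^3 + ε^3*ε⁻¹*a^2*b^3 + ε^3*ε⁻¹*a^2*b^4 + ε^3*ε⁻¹^2*a^2*b^3 + ε^3*ε⁻¹^2*a^2*b^3*t2 + ε^3*ε⁻¹^3*a^4*b^3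 + ε^4*ε⁻¹*b^3 + 2*ε^4*ε⁻¹*a*b^4 + ε^4*ε⁻¹*a*b^4*t2 + ε^4*ε⁻¹*a^2*b^4 + ε^4*ε⁻¹*a^2*b^5 + ε^4*ε⁻¹^2*a^2*b^4 + ε^4*ε⁻¹^2*a^2*b^4*t2 + ε^4*ε⁻¹^2*a^3*b^4 + ε^4*ε⁻¹^3*a^4*b^4 + ε^5*ε⁻¹*b^4 + ε^5*ε⁻¹^2*a^2*b^5 + ε^5*ε⁻¹^2*a^2*b^5*t2 + ε^5*ε⁻¹^3*a^4*b^5 + 2*ε^6*ε⁻¹^2*a^2*b^6 + ε^6*ε⁻¹^2*a^2*b^6*t2 + ε^6*ε⁻¹^3*a^4*b^6) * ht2 + (1 + a*b + a^2*b + 2*a^2*b^2 + a^3*b^2 + a^4*b^2 + a^4*b^3 + a^6*b^4 + ε⁻¹*a^3*b + ε⁻¹*a^4*b + 2*ε⁻¹*a^4*b^2 + ε⁻¹*a^5*b^2 + ε⁻¹*a^6*b^3 + ε*b + 2*ε*a^2*b^2 + 2*ε*a^2*b^3 + ε*a^3*b^2 + 2*ε*a^3*b^3 + ε*a^4*b^3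 + ε*a^4*b^4 + ε*a^5*b^4 + ε*a^6*b^5 + ε*ε⁻¹*a^2*b + ε*ε⁻¹*a^2*b^2 + ε*ε⁻¹*a^3*b^2 + ε*ε⁻¹*a^4*b^2 + ε*ε⁻¹*a^4*b^3 + ε*ε⁻¹*a^6*b^4 + ε*ε⁻¹^2*a^4*b^2 + ε*ε⁻¹^2*a^5*b^2 + ε*ε⁻¹^2*a^6*b^3 + ε^2*b^2 + ε^2*a*b^3 + ε^2*a^2*b^3 + 2*ε^2*a^2*b^4 + ε^2*a^3*b^4 + ε^2*a^4*b^4 + ε^2*a^4*b^5 + ε^2*a^6*b^6 + ε^2*ε⁻¹*a^2*b^2 + ε^2*ε⁻¹*a^2*b^3 + ε^2*ε⁻¹*a^3*b^3 + ε^2*ε⁻¹*a^4*b^3 + ε^2*ε⁻¹*a^4*b^4 + ε^2*ε⁻¹*a^5*b^4 + ε^2*ε⁻¹*a^6*b^5 + ε^2*ε⁻¹^2*a^6*b^4 + ε^2*ε⁻¹^3*a^6*b^3 + ε^3*b^3 + 2*ε^3*a^2*b^4 + 2*ε^3*a^2*b^5 + ε^3*a^4*b^6 + ε^3*ε⁻¹*a^2*b^3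 + ε^3*ε⁻¹*a^2*b^4 + ε^3*ε⁻¹*a^3*b^4 + ε^3*ε⁻¹*a^4*b^4 + ε^3*ε⁻¹*a^4*b^5 + ε^3*ε⁻¹*a^6*b^6 + ε^3*ε⁻¹^2*a^5*b^4 + ε^3*ε⁻¹^2*a^6*b^5 + ε^3*ε⁻¹^3*a^6*b^4 + ε^4*ε⁻¹*a^2*b^4 + ε^4*ε⁻¹*a^2*b^5 + ε^4*ε⁻¹*a^4*b^6 + ε^4*ε⁻¹^2*a^6*b^6 + ε^4*ε⁻¹^3*a^6*b^5 + ε^5*ε⁻¹^2*a^4*b^6 + ε^5*ε⁻¹^3*a^6*b^6) * hei + (3*a + 2*a^2 + 2*a^2*b + 2*a^3*b + a^3*b^2 + a^4*b^2 + a^5*b^3 + 3*ε⁻¹*a^3 + 2*ε⁻¹*a^4*b + ε⁻¹*a^5*b^2 + ε + 4*ε*a + ε*a*b + 4*ε*a^2*b + ε*a^2*b^2 + 3*ε*a^3*b^2 + ε*a^3*b^3 + 2*ε*a^4*b^3 + ε*a^5*b^4 + 2*ε^2 + 4*ε^2*b + 2*ε^2*a*b + 3*ε^2*a*b^2 + 2*ε^2*a^2*b^2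 + 2*ε^2*a^2*b^3 + 2*ε^2*a^3*b^3 + ε^2*a^3*b^4 + ε^2*a^4*b^4 + ε^2*a^5*b^5 + ε^3*b^2 + ε^3*a*b^3 + ε^3*a^2*b^4 + ε^3*a^3*b^5) * hab + (1 + t2 + b*t2*u4 + 2*a + a*b + a^2 + a^2*b^2 + 2*ε⁻¹*a^3 + ε⁻¹*a^3*b + ε⁻¹*a^4*b^2 + ε + 2*ε*b + ε*b*u4 + 2*ε*b*t2 + ε*b^2*u4 + 2*ε*b^2*t2*u4 + ε*b^2*t2*t4 + 2*ε*a + ε*a^2*b^2 + ε*a^2*b^3 + ε*a^3*b^3 + ε*ε⁻¹*t2 + ε*ε⁻¹*b*t2*u4 + ε*ε⁻¹*a^2*b + ε^2 + 3*ε^2*b + ε^2*b^2 + ε^2*b^2*t4 + 2*ε^2*b^2*t2 + ε^2*b^3*t4 + ε^2*b^3*t2*u4 + 3*ε^2*b^3*t2*t4 + ε^2*a*b^3 + ε^2*a^2*b^4 + 2*ε^2*ε⁻¹*b + 3*ε^2*ε⁻¹*b*t2 + ε^2*ε⁻¹*b^2*u4 + 2*ε^2*ε⁻¹*b^2*t2*u4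 + ε^2*ε⁻¹*b^2*t2*t4 + ε^2*ε⁻¹*a*b^2 + ε^2*ε⁻¹^2*a^3*b^2 + ε^3*b^2 + ε^3*b^3 + ε^3*b^3*t4 + ε^3*b^4*t4 + 3*ε^3*b^4*t2*t4 + ε^3*a^2*b^4 + ε^3*a^2*b^5 + 3*ε^3*ε⁻¹*b^2 + 4*ε^3*ε⁻¹*b^2*t2 + ε^3*ε⁻¹*b^3*u4 + 2*ε^3*ε⁻¹*b^3*t4 + 2*ε^3*ε⁻¹*b^3*t2*u4 + 3*ε^3*ε⁻¹*b^3*t2*t4 + ε^3*ε⁻¹*a^2*b^3 + ε^3*ε⁻¹^3*a^4*b^3 + ε^4*b^5*t2*t4 + 2*ε^4*ε⁻¹*b^3 + 2*ε^4*ε⁻¹*b^3*t2 + 3*ε^4*ε⁻¹*b^4*t4 + 4*ε^4*ε⁻¹*b^4*t2*t4 + ε^4*ε⁻¹*a*b^4 + ε^4*ε⁻¹^2*a^3*b^4 + ε^4*ε⁻¹^3*a^4*b^4 + ε^5*ε⁻¹*b^4 + 2*ε^5*ε⁻¹*b^5*t4 + 2*ε^5*ε⁻¹*b^5*t2*t4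 + ε^5*ε⁻¹^3*a^4*b^5 + ε^6*ε⁻¹^2*a^2*b^6 + ε^6*ε⁻¹^3*a^4*b^6) * h2);
      (simp [-mul_eq_zero, -pow_eq_zero_iff, Matrix.vecHead, Matrix.vecTail, Matrix.mul_apply, Fin.sum_univ_four, Matrix.diagonal, show ((0:Fin 4):ℕ) = 0 from rfl, show ((1:Fin 4):ℕ) = 1 from rfl, show ((2:Fin 4):ℕ) = 2 from rfl, show ((3:Fin 4):ℕ) = 3 from rfl] <;> linear_combination (1 + b*t2 + ε⁻¹ + ε*ε⁻¹*b*t2 + ε^2*ε⁻¹*b^2 + ε^2*ε⁻¹*b^2*t2) * hu4 + (1 + b + ε*b + ε*b^2*t2 + ε^2*b^3 + ε^2*b^3*t2) * ht4 + (1 + a + a*b + a*b*t2 + ε⁻¹*a + ε⁻¹*a^2 + ε⁻¹*a^2*b + ε⁻¹*a^3*b + ε*ε⁻¹*a*b + ε*ε⁻¹*a*b*t2 + ε*ε⁻¹*a^2*b + ε*ε⁻¹*a^2*b^2 + ε*ε⁻¹*a^2*b^2*t2 + ε*ε⁻¹^2*a^3*b + ε*ε⁻¹^2*a^4*b^2 +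 2*ε^2*ε⁻¹*a*b^2 + ε^2*ε⁻¹*a*b^2*t2 + 2*ε^2*ε⁻¹*a^2*b^3 + ε^2*ε⁻¹*a^2*b^3*t2 + ε^2*ε⁻¹^2*a^3*b^2 + ε^2*ε⁻¹^2*a^4*b^3) * ht2 + (a*b + a^2*b + a^2*b^2 + a^3*b^2 + a^4*b^3 + ε⁻¹*a^4*b + ε⁻¹*a^5*b^2 + ε⁻¹*a^6*b^3 + ε⁻¹^2*a^5*b + ε⁻¹^2*a^6*b^2 + ε*ε⁻¹*a^3*b^2 + ε*ε⁻¹*a^4*b^3 + ε*ε⁻¹^2*a^5*b^2 + ε*ε⁻¹^2*a^6*b^3) * hei + (1 + 3*a + a*b + 2*a^2*b + a^3*b^2 + ε⁻¹*a + 3*ε⁻¹*a^3 + 2*ε⁻¹*a^4*b + ε⁻¹*a^5*b^2 + ε⁻¹^2*a^3 + ε⁻¹^2*a^4 + ε⁻¹^2*a^5*b) * hab + (1 + b*t2*t4 + 2*a + a*b + ε⁻¹*t2*u4 + ε⁻¹*a + ε⁻¹*a^2 + 2*ε⁻¹*a^3 + ε⁻¹*a^3*b + ε⁻¹^2*a^3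 + ε⁻¹^2*a^4 + ε⁻¹^2*a^5*b + ε*b^2*t4 + ε*b^2*t2*t4 + ε*ε⁻¹*b*u4 + ε*ε⁻¹*b*t2*u4 + ε*ε⁻¹^2*a^3*b + ε*ε⁻¹^2*a^4*b^2 + ε^2*ε⁻¹*a*b^2 + ε^2*ε⁻¹*a^2*b^3 + ε^2*ε⁻¹^2*a^3*b^2 + ε^2*ε⁻¹^2*a^4*b^3) * h2);
      (simp [-mul_eq_zero, -pow_eq_zero_iff, Matrix.vecHead, Matrix.vecTail, Matrix.mul_apply, Fin.sum_univ_four, Matrix.diagonal, show ((0:Fin 4):ℕ) = 0 from rfl, show ((1:Fin 4):ℕ) = 1 from rfl, show ((2:Fin 4):ℕ) = 2 from rfl, show ((3:Fin 4):ℕ) = 3 from rfl] <;> linear_combination (ε^2*ε⁻¹*b^2 + ε^4*ε⁻¹*b^4) * ht2 + (b + a^2*b^2 + ε*ε⁻¹*a^2*b^2 + ε^2*b^3 + ε^2*a^2*b^4 + ε^3*ε⁻¹*a^2*b^4) * hei + (1 + a*b + ε^2*b^2 + ε^2*a*b^3) * hab + (1 + b + b*t2 + ε*b + ε*b^2 +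 2*ε*b^2*t2 + ε*ε⁻¹*b*t2 + ε^2*b^2 + ε^2*b^3 + ε^2*b^3*t2 + 2*ε^2*ε⁻¹*b^2 + 2*ε^2*ε⁻¹*b^2*t2 + ε^3*ε⁻¹*b^3 + 2*ε^3*ε⁻¹*b^3*t2 + ε^4*ε⁻¹*b^4) * h2);
      (simp [-mul_eq_zero, -pow_eq_zero_iff, Matrix.vecHead, Matrix.vecTail, Matrix.mul_apply, Fin.sum_univ_four, Matrix.diagonal, show ((0:Fin 4):ℕ) = 0 from rfl, show ((1:Fin 4):ℕ) = 1 from rfl, show ((2:Fin 4):ℕ) = 2 from rfl, show ((3:Fin 4):ℕ) = 3 from rfl] <;> linear_combination (b + ε*ε⁻¹*b + ε^2*ε⁻¹*b^2) * ht2 + (b + a^2*b^2 + ε⁻¹*a^2*b + ε*ε⁻¹*a^2*b^2) * hei + (1 + a*b) * hab + (1 + b + ε⁻¹*t2 + ε⁻¹*a^2*b + ε*ε⁻¹*b + ε*ε⁻¹*b*t2 + ε^2*ε⁻¹*b^2) * h2)]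
  let G1 : GL (Fin 4) F := ⟨suzXp θ 0 1, suzXp θ 0 (1 + 0 ^ (θ + 1)),
    suzXp_mul_inv m θ hθ hq 0 1, suzXp_inv_mul m θ hθ hq 0 1⟩
  let G2 : GL (Fin 4) F := ⟨suzXm θ t2 t2, suzXm θ t2 (t2 + t2 ^ (θ + 1)),
    suzXm_mul_inv m θ hθ hq t2 t2, suzXm_inv_mul m θ hθ hq t2 t2⟩
  let G3 : GL (Fin 4) F := ⟨suzXp θ 0 b, suzXp θ 0 (b + 0 ^ (θ + 1)),
    suzXp_mul_inv m θ hθ hq 0 b, suzXp_inv_mul m θ hθ hq 0 b⟩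
  let G4 : GL (Fin 4) F := ⟨suzXm θ t4 u4, suzXm θ t4 (u4 + t4 ^ (θ + 1)),
    suzXm_mul_inv m θ hθ hq t4 u4, suzXm_inv_mul m θ hθ hq t4 u4⟩
  have hg4 : g = G1 * G2 * G3 * G4 := by
    apply Units.ext
    show (↑g : Matrix (Fin 4) (Fin 4) F) = _
    rw [hg]
    show suzH θ ε = suzXp θ 0 1 * suzXm θ t2 t2 * suzXp θ 0 b * suzXm θ t4 u4
    exact main.symm
  rw [hg4]
  exact Set.mul_mem_mul (Set.mul_mem_mul (Set.mul_mem_mul ⟨0, 1, rfl⟩ ⟨t2, t2, rfl⟩)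
    ⟨0, b, rfl⟩) ⟨t4, u4, rfl⟩
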